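/- arXiv:1109.4988 — 3 statements merged into one kernel-verified Lean document; each statement's English description precedes it below -/
import Mathlib

section
/- A function f : Z_p × Z_p → Z_p (p prime) written as f(x,y) = Σ_{i,j=0}^{p-1} λ_{ij} x^i y^j is additively separable (i.e., there exist g,h : Z_p → Z_p with f(x,y) = g(x) + h(y) for all x,y) if and only if λ_{ij} = 0 for all i,j with 1 ≤ i,j ≤ p-1. -/
open Polynomial Finset

lemma coeff_zero_of_eval_zero (p : ℕ) [Fact p.Prime] (a : ℕ → ZMod p)
    (h : ∀ x : ZMod p, ∑ i ∈ Finset.range p, a i * x ^ i = 0) :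
    ∀ i < p, a i = 0 := by
  set P : (ZMod p)[X] := ∑ i ∈ Finset.range p, Polynomial.C (a i) * Polynomial.X ^ i with hP
  have heval : ∀ x : ZMod p, P.eval x = 0 := by
    intro x
    simp only [hP, Polynomial.eval_finset_sum, Polynomial.eval_mul, Polynomial.eval_C,
      Polynomial.eval_pow, Polynomial.eval_X]
    exact h x
  have hdeg : P.natDegree < p := by
    have h1 : P.natDegree ≤ p - 1 := by
      apply Polynomial.natDegree_sum_le_of_forall_le
      intro i hi
      refine le_trans (Polynomial.natDegree_C_mul_le _ _) ?_
      simpa using Nat.le_sub_one_of_lt (Finset.mem_range.mp hi)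
    have hp : 0 < p := (Fact.out : p.Prime).pos
    omega
  have hP0 : P = 0 := by
    apply Polynomial.eq_zero_of_natDegree_lt_card_of_eval_eq_zero P
      (f := (id : ZMod p → ZMod p)) Function.injective_id heval
    rwa [ZMod.card]
  intro i hi
  have hc : P.coeff i = a i := by
    rw [hP, Polynomial.finset_sum_coeff]
    rw [Finset.sum_eq_single i]
    · simp
    · intro b hb hbi
      simp [Polynomial.coeff_C_mul, Polynomial.coeff_X_pow, hbi, Ne.symm hbi]
    · intro hni; exact absurd (Finset.mem_range.mpr hi) hni
  rw [hP0] at hc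
  simpa using hc.symm

theorem stmt_0 (p : ℕ) [Fact p.Prime]
    (f : ZMod p → ZMod p → ZMod p) (lam : ℕ → ℕ → ZMod p)
    (hf : ∀ x y : ZMod p,
      f x y = ∑ i ∈ Finset.range p, ∑ j ∈ Finset.range p, lam i j * x ^ i * y ^ j) :
    (∃ g h : ZMod p → ZMod p, ∀ x y : ZMod p, f x y = g x + h y) ↔
      (∀ i j : ℕ, 1 ≤ i → i ≤ p - 1 → 1 ≤ j → j ≤ p - 1 → lam i j = 0) := by
  have hp : 0 < p := (Fact.out : p.Prime).pos
  constructor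
  · rintro ⟨g, h, hgh⟩ i j hi1 hip hj1 hjp
    have hiR : i < p := by omega
    have hjR : j < p := by omega
    -- Step 1: for each fixed x, ∑_k lam k j * x^k = lam 0 j (for j ≥ 1).
    have step1 : ∀ x : ZMod p,
        (∑ k ∈ Finset.range p, lam k j * x ^ k) - lam 0 j = 0 := by
      intro x
      have key : ∀ y : ZMod p,
          ∑ jj ∈ Finset.range p,
            ((∑ k ∈ Finset.range p, lam k jj * x ^ k) - lam 0 jj
              - (if jj = 0 then g x - g 0 else 0)) * y ^ jj = 0 := by
        intro y
        have hf0 : f 0 y = ∑ jj ∈ Finset.range p, lam 0 jj * y ^ jj := by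
          rw [hf 0 y, Finset.sum_eq_single 0]
          · simp
          · intro b _ hb0
            simp [zero_pow hb0]
          · intro hn; exact absurd (Finset.mem_range.mpr hp) hn
        have hfx : f x y = ∑ jj ∈ Finset.range p,
            (∑ k ∈ Finset.range p, lam k jj * x ^ k) * y ^ jj := by
          rw [hf x y, Finset.sum_comm]
          exact Finset.sum_congr rfl fun jj _ => by rw [Finset.sum_mul]
        have hdiff : ∑ jj ∈ Finset.range p,
            ((∑ k ∈ Finset.range p, lam k jj * x ^ k) - lam 0 jj) * y ^ jj
            = g x - g 0 := by
          have hh : f x y - f 0 y = g x - g 0 := by rw [hgh x y, hgh 0 y]; ring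
          rw [← hh, hfx, hf0, ← Finset.sum_sub_distrib]
          exact Finset.sum_congr rfl fun jj _ => by ring
        have hifsum : ∑ jj ∈ Finset.range p,
            (if jj = 0 then g x - g 0 else 0) * y ^ jj = g x - g 0 := by
          rw [Finset.sum_eq_single 0]
          · simp
          · intro b _ hb0; simp [hb0]
          · intro hn; exact absurd (Finset.mem_range.mpr hp) hn
        calc ∑ jj ∈ Finset.range p,
              ((∑ k ∈ Finset.range p, lam k jj * x ^ k) - lam 0 jj
                - (if jj = 0 then g x - g 0 else 0)) * y ^ jj
            = (∑ jj ∈ Finset.range p,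
                ((∑ k ∈ Finset.range p, lam k jj * x ^ k) - lam 0 jj) * y ^ jj)
              - ∑ jj ∈ Finset.range p,
                (if jj = 0 then g x - g 0 else 0) * y ^ jj := by
              rw [← Finset.sum_sub_distrib]
              exact Finset.sum_congr rfl fun jj _ => by ring
          _ = 0 := by rw [hdiff, hifsum]; ring
      have := coeff_zero_of_eval_zero p _ key j hjR
      simpa [if_neg (by omega : j ≠ 0)] using this
    -- Step 2: polynomial in x vanishes identically; extract coefficient i ≥ 1.
    have key2 : ∀ x : ZMod p,
        ∑ k ∈ Finset.range p,
          (lam k j - (if k = 0 then lam 0 j else 0)) * x ^ k = 0 := by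
      intro x
      have hifsum : ∑ k ∈ Finset.range p,
          (if k = 0 then lam 0 j else 0) * x ^ k = lam 0 j := by
        rw [Finset.sum_eq_single 0]
        · simp
        · intro b _ hb0; simp [hb0]
        · intro hn; exact absurd (Finset.mem_range.mpr hp) hn
      calc ∑ k ∈ Finset.range p, (lam k j - (if k = 0 then lam 0 j else 0)) * x ^ k
          = (∑ k ∈ Finset.range p, lam k j * x ^ k)
            - ∑ k ∈ Finset.range p, (if k = 0 then lam 0 j else 0) * x ^ k := by
            rw [← Finset.sum_sub_distrib]
            exact Finset.sum_congr rfl fun k _ => by ring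
        _ = 0 := by rw [hifsum]; exact step1 x
    have := coeff_zero_of_eval_zero p _ key2 i hiR
    simpa [if_neg (by omega : i ≠ 0)] using this
  · intro hz
    refine ⟨fun x => ∑ i ∈ Finset.range p, lam i 0 * x ^ i,
      fun y => ∑ j ∈ Finset.range p \ {0}, lam 0 j * y ^ j, fun x y => ?_⟩
    rw [hf]
    have hmem : (0 : ℕ) ∈ Finset.range p := Finset.mem_range.mpr hp
    have inner : ∀ i ∈ Finset.range p,
        ∑ j ∈ Finset.range p, lam i j * x ^ i * y ^ j
        = lam i 0 * x ^ i + ∑ j ∈ Finset.range p \ {0}, lam i j * x ^ i * y ^ j := by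
      intro i _
      rw [Finset.sum_eq_sum_sdiff_singleton_add hmem]
      simp [add_comm]
    rw [Finset.sum_congr rfl inner, Finset.sum_add_distrib]
    congr 1
    rw [Finset.sum_eq_single 0]
    · simp
    · intro b hb hb0
      apply Finset.sum_eq_zero
      intro j hj
      simp only [Finset.mem_sdiff, Finset.mem_range, Finset.mem_singleton] at hj
      have hbp := Finset.mem_range.mp hb
      rw [hz b j (by omega) (by omega) (by omega) (by omega)]
      ring
    · intro hn; exact absurd hmem hn
end

section
/- Let p be prime and f : Z_p × Z_p → Z_p with Δ(f) = k+1 ≥ 3, where f contains a monomial divisible by x²y (i.e., some nonzero coefficient λ_{ij} with i ≥ 2, j ≥ 1, i+j = k+1 and no nonzero λ_{i'j'} with i',j' ≥ 1 and i'+j' > k+1). Then the difference function f^{(1)}(x,y) := f(x+1,y) - f(x,y) satisfies Δ(f^{(1)}) = k. -/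
/-!
Write `f (x + 1, y) - f (x, y) = ∑ μ a j x^a y^j` with
`μ a j = ∑_{a < i < p} C(i, a) λ i j` by the binomial theorem. Since a polynomial of degree
`< p` in each variable is determined by its values on `𝔽_p²`, `λ'` coincides with `μ`.
If `a + j > k` then every `λ i j` in `μ a j` has `i + j > k + 1`, so it vanishes.
For the monomial `x^i y^j` with `i ≥ 2`, `i + j = k + 1`, only `i` contributes to `μ (i - 1) j`,
which is `i λ i j ≠ 0` because `0 < i < p`; and `i - 1 ≥ 1` keeps this term mixed.
-/

/-- `Delta p lam` is the maximum of `i + j` over pairs `1 ≤ i, j ≤ p - 1`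
(equivalently `i, j < p`) with `lam i j ≠ 0`, and `0` if there is no such pair. -/
def Delta (p : ℕ) (lam : ℕ → ℕ → ZMod p) : ℕ :=
  ((Finset.range p ×ˢ Finset.range p).filter
      (fun ij => 1 ≤ ij.1 ∧ 1 ≤ ij.2 ∧ lam ij.1 ij.2 ≠ 0)).sup
    (fun ij => ij.1 + ij.2)

open Finset

section Interpolation

variable {R : Type*} [CommRing R] [IsDomain R] {n : ℕ}

theorem eq_zero_of_forall_sum_mul_pow_eq_zero (hn : (n : Cardinal) ≤ Cardinal.mk R)
    {g : ℕ → R} (h : ∀ x : R, ∑ i ∈ range n, g i * x ^ i = 0) {i : ℕ} (hi : i < n) :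
    g i = 0 := by
  set q : Polynomial R := ∑ i ∈ range n, Polynomial.C (g i) * Polynomial.X ^ i
  have hq : q = 0 := by
    refine Polynomial.eq_zero_of_forall_eval_zero_of_natDegree_lt_card q
      (fun x => by simpa [q, Polynomial.eval_finsetSum] using h x) (lt_of_lt_of_le ?_ hn)
    refine Nat.cast_lt.2 (lt_of_le_of_lt (b := n - 1) ?_ (by omega))
    refine Polynomial.natDegree_sum_le_of_forall_le _ _ fun j hj => ?_
    exact (Polynomial.natDegree_C_mul_X_pow_le _ _).trans (by simp at hj; omega)
  simpa [q, Polynomial.finsetSum_coeff, Polynomial.coeff_C_mul_X_pow, hi] using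
    congrArg (Polynomial.coeff · i) hq

theorem eq_of_forall_sum_sum_mul_pow_mul_pow_eq (hn : (n : Cardinal) ≤ Cardinal.mk R)
    {c d : ℕ → ℕ → R}
    (h : ∀ x y : R, ∑ i ∈ range n, ∑ j ∈ range n, c i j * x ^ i * y ^ j =
      ∑ i ∈ range n, ∑ j ∈ range n, d i j * x ^ i * y ^ j)
    {i j : ℕ} (hi : i < n) (hj : j < n) : c i j = d i j := by
  have hrow : ∀ y : R, ∀ i < n, ∑ j ∈ range n, (c i j - d i j) * y ^ j = 0 := fun y i hi =>
    eq_zero_of_forall_sum_mul_pow_eq_zero (g := fun i => ∑ j ∈ range n, (c i j - d i j) * y ^ j)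
      hn (fun x => by
        simp only [sum_mul, sub_mul, sum_sub_distrib, mul_right_comm _ (y ^ _) (x ^ _)]
        exact sub_eq_zero.2 (h x y)) hi
  exact sub_eq_zero.1 (eq_zero_of_forall_sum_mul_pow_eq_zero hn (fun y => hrow y i hi) hj)

end Interpolation

section ForwardDifference

variable {R : Type*} [CommRing R]

def forwardDiffCoeff (n : ℕ) (lam : ℕ → ℕ → R) (a j : ℕ) : R :=
  ∑ i ∈ Ico (a + 1) n, (i.choose a : R) * lam i j

theorem sum_range_choose_mul_pow (x : R) (i : ℕ) :
    ∑ a ∈ range i, (i.choose a : R) * x ^ a = (x + 1) ^ i - x ^ i := by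
  rw [add_pow, sum_range_succ, Nat.choose_self]
  simp only [one_pow, mul_one, Nat.cast_one, add_sub_cancel_right]
  exact sum_congr rfl fun _ _ => mul_comm _ _

theorem sum_sum_forwardDiffCoeff_mul_pow_mul_pow (n : ℕ) (lam : ℕ → ℕ → R) (x y : R) :
    ∑ a ∈ range n, ∑ j ∈ range n, forwardDiffCoeff n lam a j * x ^ a * y ^ j =
      ∑ i ∈ range n, ∑ j ∈ range n, lam i j * (x + 1) ^ i * y ^ j -
        ∑ i ∈ range n, ∑ j ∈ range n, lam i j * x ^ i * y ^ j := by
  have hinner (i j : ℕ) : ∑ a ∈ range i, (i.choose a : R) * lam i j * x ^ a * y ^ j =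
      lam i j * (x + 1) ^ i * y ^ j - lam i j * x ^ i * y ^ j := by
    calc _ = lam i j * (∑ a ∈ range i, (i.choose a : R) * x ^ a) * y ^ j := by
          rw [mul_sum, sum_mul]
          exact sum_congr rfl fun _ _ => by ring
      _ = _ := by rw [sum_range_choose_mul_pow]; ring
  calc _ = ∑ a ∈ Ico 0 n, ∑ i ∈ Ico (a + 1) n, ∑ j ∈ range n,
        (i.choose a : R) * lam i j * x ^ a * y ^ j := by
        simp only [forwardDiffCoeff, sum_mul, ← range_eq_Ico]
        exact sum_congr rfl fun a _ => sum_comm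
    _ = ∑ i ∈ Ico 0 n, ∑ a ∈ Ico 0 i, ∑ j ∈ range n,
        (i.choose a : R) * lam i j * x ^ a * y ^ j := sum_Ico_Ico_comm' 0 n _
    _ = _ := by
      simp only [← range_eq_Ico, ← sum_sub_distrib]
      exact sum_congr rfl fun i _ => sum_comm.trans (sum_congr rfl fun j _ => hinner i j)

theorem forwardDiffCoeff_eq_zero {n : ℕ} {lam : ℕ → ℕ → R} {a j : ℕ}
    (h : ∀ i, a < i → i < n → lam i j = 0) : forwardDiffCoeff n lam a j = 0 :=
  sum_eq_zero fun i hi => by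
    rw [mem_Ico] at hi
    rw [h i (by omega) hi.2, mul_zero]

theorem forwardDiffCoeff_eq_mul {n : ℕ} {lam : ℕ → ℕ → R} {a j : ℕ} (ha : a + 1 < n)
    (h : ∀ i, a + 1 < i → i < n → lam i j = 0) :
    forwardDiffCoeff n lam a j = ((a + 1 : ℕ) : R) * lam (a + 1) j := by
  rw [forwardDiffCoeff, sum_eq_single_of_mem (a + 1) (by simp [ha]), Nat.choose_succ_self_right]
  intro i hi hne
  rw [mem_Ico] at hi
  rw [h i (by omega) hi.2, mul_zero]

end ForwardDifference

section Delta

variable {p : ℕ} {lam : ℕ → ℕ → ZMod p}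

theorem Delta_le_iff {d : ℕ} :
    Delta p lam ≤ d ↔
      ∀ i j, i < p → j < p → 1 ≤ i → 1 ≤ j → lam i j ≠ 0 → i + j ≤ d := by
  simp [Delta, Finset.sup_le_iff]

theorem le_Delta {i j : ℕ} (hi : i < p) (hj : j < p) (hi1 : 1 ≤ i) (hj1 : 1 ≤ j)
    (h : lam i j ≠ 0) : i + j ≤ Delta p lam :=
  Finset.le_sup (f := fun ij : ℕ × ℕ => ij.1 + ij.2) (b := (i, j))
    (mem_filter.2 ⟨mem_product.2 ⟨mem_range.2 hi, mem_range.2 hj⟩, hi1, hj1, h⟩)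

theorem eq_zero_of_Delta_lt {i j : ℕ} (hi : i < p) (hj : j < p) (hi1 : 1 ≤ i) (hj1 : 1 ≤ j)
    (h : Delta p lam < i + j) : lam i j = 0 :=
  by_contra fun hne => (le_Delta hi hj hi1 hj1 hne).not_gt h

end Delta

theorem stmt_4_general (p : ℕ) [Fact p.Prime] (lam : ℕ → ℕ → ZMod p) (k : ℕ)
    (hDelta : Delta p lam = k + 1)
    (hle : k + 1 ≤ p - 1)
    (hx2y : ∃ i j : ℕ, 2 ≤ i ∧ 1 ≤ j ∧ i + j = k + 1 ∧ lam i j ≠ 0)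
    (lam' : ℕ → ℕ → ZMod p)
    (hrep : ∀ x y : ZMod p,
      (∑ i ∈ Finset.range p, ∑ j ∈ Finset.range p, lam i j * (x + 1) ^ i * y ^ j) -
        (∑ i ∈ Finset.range p, ∑ j ∈ Finset.range p, lam i j * x ^ i * y ^ j) =
      ∑ i ∈ Finset.range p, ∑ j ∈ Finset.range p, lam' i j * x ^ i * y ^ j) :
    Delta p lam' = k := by
  have hcoeff : ∀ a < p, ∀ j < p, lam' a j = forwardDiffCoeff p lam a j := fun a ha j hj =>
    eq_of_forall_sum_sum_mul_pow_mul_pow_eq (by simp)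
      (fun x y => by rw [← hrep, sum_sum_forwardDiffCoeff_mul_pow_mul_pow]) ha hj
  have hvanish :
      ∀ i j, i < p → j < p → 1 ≤ i → 1 ≤ j → k + 1 < i + j → lam i j = 0 :=
    fun i j hi hj hi1 hj1 hij => eq_zero_of_Delta_lt hi hj hi1 hj1 (hDelta ▸ hij)
  obtain ⟨i, j, hi, hj, hij, hne⟩ := hx2y
  obtain ⟨a, rfl⟩ : ∃ a, i = a + 1 := ⟨i - 1, by omega⟩
  refine le_antisymm (Delta_le_iff.2 fun b c hb hc hb1 hc1 hbc => ?_) ?_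
  · by_contra hgt
    refine hbc ((hcoeff b hb c hc).trans (forwardDiffCoeff_eq_zero fun i hi hip => ?_))
    exact hvanish i c hip hc (by omega) hc1 (by omega)
  · have hlead : lam' a j = ((a + 1 : ℕ) : ZMod p) * lam (a + 1) j := by
      rw [hcoeff a (by omega) j (by omega), forwardDiffCoeff_eq_mul (by omega)]
      exact fun i hi hip => hvanish i j hip (by omega) (by omega) hj (by omega)
    have hunit : ((a + 1 : ℕ) : ZMod p) ≠ 0 := (ZMod.natCast_eq_zero_iff _ p).not.2
      (Nat.not_dvd_of_pos_of_lt (by omega) (by omega))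
    have := le_Delta (by omega) (by omega) (by omega) hj (hlead ▸ mul_ne_zero hunit hne)
    omega

theorem stmt_4 (p : ℕ) [Fact p.Prime] (lam : ℕ → ℕ → ZMod p) (k : ℕ)
    (hDelta : Delta p lam = k + 1)
    (hk : 3 ≤ k + 1)
    (hle : k + 1 ≤ p - 1)
    (hx2y : ∃ i j : ℕ, 2 ≤ i ∧ 1 ≤ j ∧ i + j = k + 1 ∧ lam i j ≠ 0)
    (lam' : ℕ → ℕ → ZMod p)
    (hrep : ∀ x y : ZMod p,
      (∑ i ∈ Finset.range p, ∑ j ∈ Finset.range p, lam i j * (x + 1) ^ i * y ^ j) -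
        (∑ i ∈ Finset.range p, ∑ j ∈ Finset.range p, lam i j * x ^ i * y ^ j) =
      ∑ i ∈ Finset.range p, ∑ j ∈ Finset.range p, lam' i j * x ^ i * y ^ j) :
    Delta p lam' = k :=
  stmt_4_general p lam k hDelta hle hx2y lam' hrep
end

section
/- Let p be prime and f : Z_p × Z_p → Z_p with Δ(f) ≥ 2 and Δ(f) ≤ p-1. Then there exists a finite sequence f = f_0, f_1, ..., f_L of functions Z_p × Z_p → Z_p such that each f_{i+1}(x,y) equals either f_i(x+1,y) - f_i(x,y) or f_i(x,y+1) - f_i(x,y), L = Δ(f) - 2, and f_L(x,y) = λxy + g(x) + h(y) for some nonzero λ ∈ Z_p and functions g, h : Z_p → Z_p. -/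
open Finset

def evalc (p : ℕ) (c : ℕ → ℕ → ZMod p) (x y : ZMod p) : ZMod p :=
  ∑ i ∈ range p, ∑ j ∈ range p, c i j * x ^ i * y ^ j

def dxc (p : ℕ) (c : ℕ → ℕ → ZMod p) (k j : ℕ) : ZMod p :=
  ∑ i ∈ range p, if k < i then (i.choose k : ZMod p) * c i j else 0

lemma swap_eval (p : ℕ) (c : ℕ → ℕ → ZMod p) (x y : ZMod p) :
    evalc p (fun i j => c j i) x y = evalc p c y x := by
  unfold evalc
  rw [Finset.sum_comm]
  exact sum_congr rfl fun j _ => sum_congr rfl fun i _ => by ring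

lemma sum_swap3 (p : ℕ) (T : ℕ → ℕ → ℕ → ZMod p) :
      ∑ k ∈ range p, ∑ j ∈ range p, ∑ i ∈ range p, T k j i
        = ∑ i ∈ range p, ∑ j ∈ range p, ∑ k ∈ range p, T k j i := by
  have h1 : ∑ k ∈ range p, ∑ j ∈ range p, ∑ i ∈ range p, T k j i
      = ∑ k ∈ range p, ∑ i ∈ range p, ∑ j ∈ range p, T k j i :=
    sum_congr rfl fun k _ => Finset.sum_comm
  rw [h1, Finset.sum_comm]
  exact sum_congr rfl fun i _ => Finset.sum_comm

lemma range_filter_lt (p i : ℕ) (h : i ≤ p) :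
    (range p).filter (fun k => k < i) = range i := by
  ext k; simp only [mem_filter, mem_range]; omega

lemma sub_pow_one (p : ℕ) (x : ZMod p) (i : ℕ) :
    (x + 1) ^ i - x ^ i = ∑ k ∈ range i, x ^ k * (i.choose k : ZMod p) := by
  rw [add_pow]
  simp only [one_pow, mul_one]
  rw [Finset.sum_range_succ]
  simp

lemma eval_dx (p : ℕ) (c : ℕ → ℕ → ZMod p) (x y : ZMod p) :
    evalc p (dxc p c) x y = evalc p c (x + 1) y - evalc p c x y := by
  unfold evalc dxc
  have step1 : ∑ k ∈ range p, ∑ j ∈ range p,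
      (∑ i ∈ range p, if k < i then (i.choose k : ZMod p) * c i j else 0) * x ^ k * y ^ j
      = ∑ k ∈ range p, ∑ j ∈ range p, ∑ i ∈ range p,
        (if k < i then (i.choose k : ZMod p) * c i j * x ^ k * y ^ j else 0) := by
    refine sum_congr rfl fun k _ => sum_congr rfl fun j _ => ?_
    rw [sum_mul, sum_mul]
    refine sum_congr rfl fun i _ => ?_
    split <;> simp
  rw [step1, sum_swap3, ← Finset.sum_sub_distrib]
  refine sum_congr rfl fun i hi => ?_
  rw [← Finset.sum_sub_distrib]
  refine sum_congr rfl fun j _ => ?_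
  rw [Finset.sum_ite, Finset.sum_const_zero, add_zero,
      range_filter_lt p i (le_of_lt (mem_range.mp hi))]
  have : c i j * (x+1) ^ i * y ^ j - c i j * x ^ i * y ^ j
      = c i j * ((x+1) ^ i - x ^ i) * y ^ j := by ring
  rw [this, sub_pow_one, Finset.mul_sum, Finset.sum_mul]
  exact sum_congr rfl fun k _ => by ring

lemma dx_drop (p d : ℕ) (c : ℕ → ℕ → ZMod p)
    (hd : ∀ i j, 1 ≤ i → 1 ≤ j → c i j ≠ 0 → i + j ≤ d)
    (k j : ℕ) (hk : 1 ≤ k) (hj : 1 ≤ j) (hne : dxc p c k j ≠ 0) :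
    k + j ≤ d - 1 := by
  by_contra hcon
  apply hne
  unfold dxc
  refine Finset.sum_eq_zero fun i _ => ?_
  split
  · rename_i hki
    have : c i j = 0 := by
      by_contra hc
      have := hd i j (by omega) hj hc
      omega
    simp [this]
  · rfl

lemma dx_top (p d : ℕ) (c : ℕ → ℕ → ZMod p)
    (hd : ∀ i j, 1 ≤ i → 1 ≤ j → c i j ≠ 0 → i + j ≤ d)
    (k j : ℕ) (hj : 1 ≤ j) (hsum : k + 1 + j = d) (hkp : k + 1 < p) :
    dxc p c k j = (k + 1 : ℕ) * c (k + 1) j := by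
  unfold dxc
  rw [Finset.sum_eq_single (k + 1)]
  · simp [Nat.choose_succ_self_right]
  · intro i _ hne
    split
    · rename_i hki
      have : c i j = 0 := by
        by_contra hc
        have := hd i j (by omega) hj hc
        omega
      simp [this]
    · rfl
  · intro h
    exact absurd (mem_range.mpr hkp) h

lemma eval_final (p : ℕ) (hp : 2 ≤ p) (c : ℕ → ℕ → ZMod p)
    (hd : ∀ i j, 1 ≤ i → 1 ≤ j → c i j ≠ 0 → i + j ≤ 2) (x y : ZMod p) :
    evalc p c x y = c 1 1 * x * y + (∑ i ∈ range p, c i 0 * x ^ i)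
      + (∑ j ∈ range p, if 1 ≤ j then c 0 j * y ^ j else 0) := by
  unfold evalc
  have split : ∀ i ∈ range p, ∀ j ∈ range p, c i j * x ^ i * y ^ j
      = (if i = 1 ∧ j = 1 then c 1 1 * x * y else 0)
        + (if j = 0 then c i 0 * x ^ i else 0)
        + (if i = 0 ∧ 1 ≤ j then c 0 j * y ^ j else 0) := by
    intro i _ j _
    rcases Nat.eq_zero_or_pos i with hi | hi
    · subst hi
      rcases Nat.eq_zero_or_pos j with hj | hj
      · subst hj; norm_num
      · have h1 : ¬ ((0:ℕ) = 1 ∧ j = 1) := by omega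
        have h2 : j ≠ 0 := by omega
        have hj' : 1 ≤ j := hj
        simp [h1, h2, hj']
    · rcases Nat.eq_zero_or_pos j with hj | hj
      · subst hj
        have h1 : ¬ (i = 1 ∧ (0:ℕ) = 1) := by omega
        have h3 : ¬ (i = 0 ∧ (1:ℕ) ≤ 0) := by omega
        simp [h1, h3]
      · by_cases h11 : i = 1 ∧ j = 1
        · obtain ⟨rfl, rfl⟩ := h11
          have h2 : (1:ℕ) ≠ 0 := by omega
          have h3 : ¬ ((1:ℕ) = 0 ∧ (1:ℕ) ≤ 1) := by omega
          simp [h2, h3, pow_one]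
        · have hc : c i j = 0 := by
            by_contra hc
            exact h11 (by have := hd i j hi hj hc; omega)
          have h2 : j ≠ 0 := by omega
          have h3 : ¬ (i = 0 ∧ 1 ≤ j) := by omega
          simp [hc, h11, h2, h3]
  rw [Finset.sum_congr rfl (fun i hi => Finset.sum_congr rfl (split i hi))]
  simp only [Finset.sum_add_distrib]
  have h1mem : (1:ℕ) ∈ range p := mem_range.mpr (by omega)
  have h0mem : (0:ℕ) ∈ range p := mem_range.mpr (by omega)
  congr 1
  · congr 1
    · have inner : ∀ i ∈ range p,
          (∑ j ∈ range p, if i = 1 ∧ j = 1 then c 1 1 * x * y else 0)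
            = if i = 1 then c 1 1 * x * y else 0 := by
        intro i _
        by_cases hi : i = 1
        · subst hi
          simp only [true_and]
          rw [Finset.sum_ite_eq' (range p) 1 (fun _ => c 1 1 * x * y)]
          simp [h1mem]
        · simp [hi]
      rw [Finset.sum_congr rfl inner,
        Finset.sum_ite_eq' (range p) 1 (fun _ => c 1 1 * x * y)]
      simp [h1mem]
    · refine sum_congr rfl fun i _ => ?_
      rw [Finset.sum_ite_eq' (range p) 0 (fun _ => c i 0 * x ^ i)]
      simp [h0mem]
  · have inner : ∀ i ∈ range p,
        (∑ j ∈ range p, if i = 0 ∧ 1 ≤ j then c 0 j * y ^ j else 0)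
          = if i = 0 then (∑ j ∈ range p, if 1 ≤ j then c 0 j * y ^ j else 0) else 0 := by
      intro i _
      by_cases hi : i = 0
      · subst hi; simp
      · simp [hi]
    rw [Finset.sum_congr rfl inner,
      Finset.sum_ite_eq' (range p) 0
        (fun _ => ∑ j ∈ range p, if 1 ≤ j then c 0 j * y ^ j else 0)]
    simp [h0mem]

def dyc (p : ℕ) (c : ℕ → ℕ → ZMod p) (i k : ℕ) : ZMod p :=
  dxc p (fun a b => c b a) k i

lemma eval_dy (p : ℕ) (c : ℕ → ℕ → ZMod p) (x y : ZMod p) :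
    evalc p (dyc p c) x y = evalc p c x (y + 1) - evalc p c x y := by
  have h1 : evalc p (dyc p c) x y = evalc p (dxc p (fun a b => c b a)) y x :=
    swap_eval p (dxc p (fun a b => c b a)) x y
  rw [h1, eval_dx]
  have h2 : evalc p (fun a b => c b a) (y+1) x = evalc p c x (y+1) :=
    swap_eval p c (y+1) x
  have h3 : evalc p (fun a b => c b a) y x = evalc p c x y :=
    swap_eval p c y x
  rw [h2, h3]

lemma dy_drop (p d : ℕ) (c : ℕ → ℕ → ZMod p)
    (hd : ∀ i j, 1 ≤ i → 1 ≤ j → c i j ≠ 0 → i + j ≤ d)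
    (i k : ℕ) (hi : 1 ≤ i) (hk : 1 ≤ k) (hne : dyc p c i k ≠ 0) :
    i + k ≤ d - 1 := by
  have := dx_drop p d (fun a b => c b a)
    (fun a b ha hb hne => by rw [Nat.add_comm]; exact hd b a hb ha hne)
    k i hk hi hne
  omega

lemma dy_top (p d : ℕ) (c : ℕ → ℕ → ZMod p)
    (hd : ∀ i j, 1 ≤ i → 1 ≤ j → c i j ≠ 0 → i + j ≤ d)
    (i k : ℕ) (hi : 1 ≤ i) (hsum : i + (k + 1) = d) (hkp : k + 1 < p) :
    dyc p c i k = (k + 1 : ℕ) * c i (k + 1) := by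
  have := dx_top p d (fun a b => c b a)
    (fun a b ha hb hne => by rw [Nat.add_comm]; exact hd b a hb ha hne)
    k i hi (by omega) hkp
  exact this

lemma cast_ne_zero_of_lt (p a : ℕ) [Fact p.Prime] (h0 : 0 < a) (hp : a < p) :
    (a : ZMod p) ≠ 0 := by
  intro h
  rw [ZMod.natCast_eq_zero_iff] at h
  exact absurd (Nat.le_of_dvd h0 h) (by omega)

lemma main_lemma (p : ℕ) [Fact p.Prime] :
    ∀ d, 2 ≤ d → d ≤ p - 1 →
    ∀ c : ℕ → ℕ → ZMod p,
      (∀ i j, 1 ≤ i → 1 ≤ j → c i j ≠ 0 → i + j ≤ d) →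
      (∃ a b, 1 ≤ a ∧ 1 ≤ b ∧ a + b = d ∧ c a b ≠ 0) →
      ∃ F : ℕ → (ZMod p → ZMod p → ZMod p),
        F 0 = evalc p c ∧
        (∀ i < d - 2,
          (∀ x y, F (i + 1) x y = F i (x + 1) y - F i x y) ∨
          (∀ x y, F (i + 1) x y = F i x (y + 1) - F i x y)) ∧
        ∃ (lam₀ : ZMod p) (g h : ZMod p → ZMod p), lam₀ ≠ 0 ∧
          ∀ x y, F (d - 2) x y = lam₀ * x * y + g x + h y := by
  have hp2 : 2 ≤ p := (Fact.out : p.Prime).two_le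
  intro d hd2
  induction d, hd2 using Nat.le_induction with
  | base =>
    intro _ c hd ⟨a, b, ha, hb, hab, hne⟩
    refine ⟨fun _ => evalc p c, rfl, fun i hi => absurd hi (by omega), c 1 1,
      fun x => ∑ i ∈ range p, c i 0 * x ^ i,
      fun y => ∑ j ∈ range p, if 1 ≤ j then c 0 j * y ^ j else 0, ?_, ?_⟩
    · have : a = 1 ∧ b = 1 := by omega
      obtain ⟨rfl, rfl⟩ := this
      exact hne
    · intro x y
      exact eval_final p hp2 c hd x y
  | succ d hd2 ih =>
    intro hdp c hd ⟨a, b, ha, hb, hab, hne⟩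
    by_cases hcase : 2 ≤ a
    · -- use x-difference
      set c' := dxc p c with hc'
      have hd' : ∀ i j, 1 ≤ i → 1 ≤ j → c' i j ≠ 0 → i + j ≤ d := by
        intro i j hi hj hne'
        have := dx_drop p (d+1) c hd i j hi hj hne'
        omega
      have hwit : c' (a-1) b ≠ 0 := by
        have htop := dx_top p (d+1) c hd (a-1) b hb (by omega) (by omega)
        have h1 : a - 1 + 1 = a := by omega
        rw [h1] at htop
        rw [hc', htop]
        exact mul_ne_zero (cast_ne_zero_of_lt p a (by omega) (by omega)) hne
      obtain ⟨F', hF0, hFstep, lam₀, g, h, hlam, hfin⟩ :=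
        ih (by omega) c' hd' ⟨a - 1, b, by omega, hb, by omega, hwit⟩
      refine ⟨fun n => if n = 0 then evalc p c else F' (n-1), rfl, ?_, lam₀, g, h, hlam, ?_⟩
      · intro i hi
        match i with
        | 0 =>
          left
          intro x y
          show F' 0 x y = evalc p c (x + 1) y - evalc p c x y
          rw [hF0, eval_dx]
        | (m+1) =>
          have hm : m < d - 2 := by omega
          rcases hFstep m hm with hstep | hstep
          · left; intro x y
            simpa using hstep x y
          · right; intro x y
            simpa using hstep x y
      · intro x y
        have hne0 : d + 1 - 2 ≠ 0 := by omega
        have hF : (fun n => if n = 0 then evalc p c else F' (n-1)) (d + 1 - 2)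
            = F' (d - 2) := by
          show (if d + 1 - 2 = 0 then evalc p c else F' (d + 1 - 2 - 1)) = F' (d - 2)
          rw [if_neg hne0]
          congr 1
        rw [hF]
        exact hfin x y
    · -- a = 1, so b ≥ 2 ; use y-difference
      have ha1 : a = 1 := by omega
      have hb2 : 2 ≤ b := by omega
      set c' := dyc p c with hc'
      have hd' : ∀ i j, 1 ≤ i → 1 ≤ j → c' i j ≠ 0 → i + j ≤ d := by
        intro i j hi hj hne'
        have := dy_drop p (d+1) c hd i j hi hj hne'
        omega
      have hwit : c' a (b-1) ≠ 0 := by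
        have htop := dy_top p (d+1) c hd a (b-1) ha (by omega) (by omega)
        have h1 : b - 1 + 1 = b := by omega
        rw [h1] at htop
        rw [hc', htop]
        exact mul_ne_zero (cast_ne_zero_of_lt p b (by omega) (by omega)) hne
      obtain ⟨F', hF0, hFstep, lam₀, g, h, hlam, hfin⟩ :=
        ih (by omega) c' hd' ⟨a, b - 1, ha, by omega, by omega, hwit⟩
      refine ⟨fun n => if n = 0 then evalc p c else F' (n-1), rfl, ?_, lam₀, g, h, hlam, ?_⟩
      · intro i hi
        match i with
        | 0 =>
          right
          intro x y
          show F' 0 x y = evalc p c x (y + 1) - evalc p c x y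
          rw [hF0, eval_dy]
        | (m+1) =>
          have hm : m < d - 2 := by omega
          rcases hFstep m hm with hstep | hstep
          · left; intro x y
            simpa using hstep x y
          · right; intro x y
            simpa using hstep x y
      · intro x y
        have hne0 : d + 1 - 2 ≠ 0 := by omega
        have hF : (fun n => if n = 0 then evalc p c else F' (n-1)) (d + 1 - 2)
            = F' (d - 2) := by
          show (if d + 1 - 2 = 0 then evalc p c else F' (d + 1 - 2 - 1)) = F' (d - 2)
          rw [if_neg hne0]
          congr 1
        rw [hF]
        exact hfin x y



theorem stmt_14 (p : ℕ) [Fact p.Prime]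
    (f : ZMod p → ZMod p → ZMod p) (lam : ℕ → ℕ → ZMod p)
    (hf : ∀ x y : ZMod p,
      f x y = ∑ i ∈ Finset.range p, ∑ j ∈ Finset.range p, lam i j * x ^ i * y ^ j)
    (hD2 : 2 ≤ Delta p lam) (hDp : Delta p lam ≤ p - 1) :
    ∃ F : ℕ → (ZMod p → ZMod p → ZMod p),
      F 0 = f ∧
      (∀ i < Delta p lam - 2,
        (∀ x y, F (i + 1) x y = F i (x + 1) y - F i x y) ∨
        (∀ x y, F (i + 1) x y = F i x (y + 1) - F i x y)) ∧
      ∃ (lam₀ : ZMod p) (g h : ZMod p → ZMod p), lam₀ ≠ 0 ∧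
        ∀ x y, F (Delta p lam - 2) x y = lam₀ * x * y + g x + h y := by
  classical
  set s := ((Finset.range p ×ˢ Finset.range p).filter
      (fun ij => 1 ≤ ij.1 ∧ 1 ≤ ij.2 ∧ lam ij.1 ij.2 ≠ 0)) with hs
  set c : ℕ → ℕ → ZMod p := fun i j => if i < p ∧ j < p then lam i j else 0 with hc
  have hfc : f = evalc p c := by
    funext x y
    rw [hf, evalc]
    refine Finset.sum_congr rfl fun i hi => Finset.sum_congr rfl fun j hj => ?_
    simp only [Finset.mem_range] at hi hj
    show lam i j * x ^ i * y ^ j = (if i < p ∧ j < p then lam i j else 0) * x ^ i * y ^ j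
    rw [if_pos ⟨hi, hj⟩]
  have hd : ∀ i j, 1 ≤ i → 1 ≤ j → c i j ≠ 0 → i + j ≤ Delta p lam := by
    intro i j hi hj hne
    have hne' : (if i < p ∧ j < p then lam i j else 0) ≠ 0 := hne
    clear hne
    rename' hne' => hne
    by_cases hij : i < p ∧ j < p
    · rw [if_pos hij] at hne
      have hmem : (i, j) ∈ s := by
        rw [hs]
        simp only [Finset.mem_filter, Finset.mem_product, Finset.mem_range]
        exact ⟨⟨hij.1, hij.2⟩, hi, hj, hne⟩
      exact Finset.le_sup (f := fun ij => ij.1 + ij.2) hmem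
    · rw [if_neg hij] at hne
      exact absurd rfl hne
  have hsne : s.Nonempty := by
    by_contra hemp
    rw [Finset.not_nonempty_iff_eq_empty] at hemp
    have : Delta p lam = 0 := by
      rw [Delta, ← hs, hemp, Finset.sup_empty]
      rfl
    omega
  obtain ⟨ab, hab, hsup⟩ := Finset.exists_mem_eq_sup s hsne (fun ij => ij.1 + ij.2)
  rw [hs] at hab
  simp only [Finset.mem_filter, Finset.mem_product, Finset.mem_range] at hab
  obtain ⟨⟨hap, hbp⟩, ha1, hb1, hlamne⟩ := hab
  have hwit : ∃ a b, 1 ≤ a ∧ 1 ≤ b ∧ a + b = Delta p lam ∧ c a b ≠ 0 := by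
    refine ⟨ab.1, ab.2, ha1, hb1, ?_, ?_⟩
    · rw [show Delta p lam = s.sup (fun ij => ij.1 + ij.2) from rfl, hsup]
    · show (if ab.1 < p ∧ ab.2 < p then lam ab.1 ab.2 else 0) ≠ 0
      rw [if_pos ⟨hap, hbp⟩]
      exact hlamne
  obtain ⟨F, hF0, hFstep, result⟩ :=
    main_lemma p (Delta p lam) hD2 hDp c hd hwit
  exact ⟨F, by rw [hF0, hfc], hFstep, result⟩
end
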